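/- Define *L_0 = *L, *R_0 = *R, *L_n = {*L_{n-1},...,*L_0}, *R_n = {*R_{n-1},...,*R_0}. For all nonnegative integers a_1, a_2: *L_{a_1} + *L_{a_2} ≡ *L_{a_1 ⊕ a_2}, *L_{a_1} + *R_{a_2} ≡ *R_{a_1 ⊕ a_2}, and *R_{a_1} + *R_{a_2} ≡ *L_{a_1 ⊕ a_2}, where ⊕ denotes bitwise XOR (nim-sum). -/

import Mathlib

/-- Positions of LR-ending partisan games: two terminals and finite option sets
(represented as lists; set-like behavior is captured by the `Iso` relation). -/
inductive Pos : Type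
  | termL : Pos
  | termR : Pos
  | opts : List Pos → Pos

namespace Pos

/-- Valid positions: every non-terminal position has a nonempty set of options. -/
inductive Valid : Pos → Prop
  | termL : Valid termL
  | termR : Valid termR
  | opts : ∀ gs : List Pos, gs ≠ [] → (∀ g ∈ gs, Valid g) → Valid (opts gs)

/-- Disjunctive sum. -/
def sum : Pos → Pos → Pos
  | termL, termL => termL
  | termL, termR => termR
  | termR, termL => termR
  | termR, termR => termL
  | termL, opts hs => opts (hs.attach.map (fun h => sum termL h.1))
  | termR, opts hs => opts (hs.attach.map (fun h => sum termR h.1))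
  | opts gs, termL => opts (gs.attach.map (fun g => sum g.1 termL))
  | opts gs, termR => opts (gs.attach.map (fun g => sum g.1 termR))
  | opts gs, opts hs =>
      opts (gs.attach.map (fun g => sum g.1 (opts hs)) ++
            hs.attach.map (fun h => sum (opts gs) h.1))
termination_by g h => sizeOf g + sizeOf h
decreasing_by
  all_goals
    first
      | (have := List.sizeOf_lt_of_mem h.2; simp_all; omega)
      | (have := List.sizeOf_lt_of_mem g.2; simp_all; omega)

/-- Conjugate: swap the two kinds of terminal positions. -/
def conj : Pos → Pos
  | termL => termR
  | termR => termL
  | opts gs => opts (gs.attach.map (fun g => conj g.1))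
decreasing_by
  have := List.sizeOf_lt_of_mem g.2; simp_all; omega

/-- Isomorphism of game trees (positions viewed as sets of options). -/
def Iso : Pos → Pos → Prop
  | termL, termL => True
  | termR, termR => True
  | opts gs, opts hs =>
      (∀ g ∈ gs.attach, ∃ h ∈ hs.attach, Iso g.1 h.1) ∧
      (∀ h ∈ hs.attach, ∃ g ∈ gs.attach, Iso g.1 h.1)
  | _, _ => False
termination_by g h => sizeOf g + sizeOf h
decreasing_by
  all_goals
    (have hg := List.sizeOf_lt_of_mem g.2; have hh := List.sizeOf_lt_of_mem h.2;
     simp_all; omega)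

inductive Player : Type
  | left : Player
  | right : Player
  deriving DecidableEq

/-- `Wins p b G` : player `p` has a winning strategy from position `G`,
where `b = true` means it is `p`'s turn to move and `b = false` means the
opponent is to move.  A terminal position is won by the player given by
its label, regardless of whose turn it is. -/
inductive Wins : Player → Bool → Pos → Prop
  | termL : ∀ b, Wins Player.left b termL
  | termR : ∀ b, Wins Player.right b termR
  | move : ∀ (p : Player) (gs : List Pos) (g : Pos), g ∈ gs →
      Wins p false g → Wins p true (opts gs)
  | wait : ∀ (p : Player) (gs : List Pos),
      (∀ g, g ∈ gs → Wins p true g) → Wins p false (opts gs)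

inductive Outcome : Type
  | L : Outcome
  | R : Outcome
  | N : Outcome
  | P : Outcome
  deriving DecidableEq

/-- The outcome of a position. -/
noncomputable def outcome (G : Pos) : Outcome := by
  classical
  exact
    if Wins Player.left true G then
      if Wins Player.left false G then Outcome.L else Outcome.N
    else
      if Wins Player.left false G then Outcome.P else Outcome.R

/-- Equivalence of positions: the outcome agrees in every (valid) context. -/
def equiv (G H : Pos) : Prop :=
  ∀ X : Pos, Valid X → outcome (sum G X) = outcome (sum H X)

end Pos
namespace Pos

mutual
/-- `Ln n` is the position `*L_n`: `*L_0 = *L`, `*L_n = {*L_{n-1}, ..., *L_0}`. -/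
def Ln : ℕ → Pos
  | 0 => termL
  | n + 1 => opts (LnList (n + 1))
termination_by n => 2 * n + 1
/-- `LnList n = [*L_{n-1}, ..., *L_0]`. -/
def LnList : ℕ → List Pos
  | 0 => []
  | n + 1 => Ln n :: LnList n
termination_by n => 2 * n
end

mutual
/-- `Rn n` is the position `*R_n`. -/
def Rn : ℕ → Pos
  | 0 => termR
  | n + 1 => opts (RnList (n + 1))
termination_by n => 2 * n + 1
def RnList : ℕ → List Pos
  | 0 => []
  | n + 1 => Rn n :: RnList n
termination_by n => 2 * n
end

/-- `kome n` is `✠_n = {*L_{n-1}, *R_{n-1}, ..., *L_0, *R_0}` (for `n ≥ 1`). -/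
def kome (n : ℕ) : Pos := opts (LnList n ++ RnList n)

mutual
/-- `starAux n` represents `★(n+1)`: `★1 = {*L, *R}`, `★n = {★(n-1),...,★1,*L,*R}`. -/
def starAux : ℕ → Pos
  | 0 => opts [termL, termR]
  | n + 1 => opts (starList (n + 1) ++ [termL, termR])
termination_by n => 2 * n + 1
/-- `starList n = [★n, ..., ★1]`. -/
def starList : ℕ → List Pos
  | 0 => []
  | n + 1 => starAux n :: starList n
termination_by n => 2 * n
end

/-- `bigstar n` is `★n` (meaningful for `n ≥ 1`). -/
def bigstar (n : ℕ) : Pos := starAux (n - 1)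

/-- Sum of a list of positions (`*L` is the empty sum, and `G + *L = G`). -/
def sumList (l : List Pos) : Pos := l.foldr sum termL

/-- Nim-sum (XOR) of a list of naturals. -/
def xorList (l : List ℕ) : ℕ := l.foldr (· ^^^ ·) 0

/-- Minimum excludant of a list of naturals. -/
noncomputable def mexList (l : List ℕ) : ℕ := sInf {n : ℕ | n ∉ l}

end Pos

/-!
Write `*t_n` for `nim t n` with `t` terminal, and compare `(*t₁_a + *t₂_b) + X` with
`*(t₁ + t₂)_(a ⊕ b) + X` for each player and each first mover, by induction on `a + b` and the
size of `X`. If `X` is terminal, the owner of the terminal `(t₁ + t₂) + X` wins both games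
whoever starts, since a move to some `*_0` is always available. Otherwise the options
correspond: those of the right-hand game are the `*_c + X` with `c < a ⊕ b`, each of the form
`a' ⊕ b` or `a ⊕ b'`, and the moves in `X`; the remaining options `*_d + X`, `d > a ⊕ b`, of
the left-hand game are reversible through `*_(a ⊕ b) + X`, exactly as in the mex rule.
-/

theorem Nat.exists_xor_eq_of_lt_xor {a b c : ℕ} (h : c < a ^^^ b) :
    (∃ a' < a, a' ^^^ b = c) ∨ ∃ b' < b, a ^^^ b' = c := by
  rcases Nat.lt_xor_cases h with h | h
  · exact .inl ⟨c ^^^ b, h, Nat.xor_xor_cancel_right c b⟩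
  · exact .inr ⟨c ^^^ a, h, by rw [Nat.xor_comm c a, Nat.xor_xor_cancel_left]⟩

namespace Pos

def moves : Pos → List Pos
  | opts gs => gs
  | _ => []

def IsTerminal (t : Pos) : Prop := t = termL ∨ t = termR

variable {G X t : Pos} {p : Player}

lemma IsTerminal.moves_eq_nil (ht : IsTerminal t) : moves t = [] := by
  rcases ht with rfl | rfl <;> rfl

lemma IsTerminal.exists_wins (ht : IsTerminal t) : ∃ p, ∀ b, Wins p b t := by
  rcases ht with rfl | rfl
  · exact ⟨.left, Wins.termL⟩
  · exact ⟨.right, Wins.termR⟩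

lemma isTerminal_sum (hG : IsTerminal G) (hX : IsTerminal X) : IsTerminal (sum G X) := by
  rcases hG with rfl | rfl <;> rcases hX with rfl | rfl <;> simp [IsTerminal, sum]

lemma not_isTerminal_of_mem_moves {g : Pos} (hg : g ∈ moves G) : ¬IsTerminal G := by
  rintro (rfl | rfl) <;> simp [moves] at hg

lemma sizeOf_lt_of_mem_moves {g : Pos} (hg : g ∈ moves G) : sizeOf g < sizeOf G := by
  rcases G with _ | _ | gs
  · simp [moves] at hg
  · simp [moves] at hg
  · simp only [moves] at hg
    have := List.sizeOf_lt_of_mem hg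
    simp only [opts.sizeOf_spec]
    omega

lemma sum_eq_opts (h : ¬(IsTerminal G ∧ IsTerminal X)) :
    sum G X = opts ((moves G).map (sum · X) ++ (moves X).map (sum G ·)) := by
  rcases G with _ | _ | gs <;> rcases X with _ | _ | xs <;>
    simp_all [IsTerminal, sum, moves, List.map_subtype, List.unattach_attach]

lemma not_isTerminal_sum (h : ¬(IsTerminal G ∧ IsTerminal X)) : ¬IsTerminal (sum G X) := by
  rw [sum_eq_opts h]
  simp [IsTerminal]

lemma mem_moves_sum (h : ¬(IsTerminal G ∧ IsTerminal X)) {o : Pos} :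
    o ∈ moves (sum G X) ↔ (∃ g ∈ moves G, sum g X = o) ∨ ∃ x ∈ moves X, sum G x = o := by
  rw [sum_eq_opts h]
  simp [moves]

lemma wins_true_iff (hG : ¬IsTerminal G) : Wins p true G ↔ ∃ g ∈ moves G, Wins p false g := by
  rcases G with _ | _ | gs
  · exact absurd (.inl rfl) hG
  · exact absurd (.inr rfl) hG
  · constructor
    · rintro (_ | _ | ⟨_, _, g, hg, hw⟩)
      exact ⟨g, hg, hw⟩
    · rintro ⟨g, hg, hw⟩
      exact .move p gs g hg hw

lemma wins_false_iff (hG : ¬IsTerminal G) : Wins p false G ↔ ∀ g ∈ moves G, Wins p true g := by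
  rcases G with _ | _ | gs
  · exact absurd (.inl rfl) hG
  · exact absurd (.inr rfl) hG
  · constructor
    · rintro (_ | _ | _ | ⟨_, _, hw⟩)
      exact hw
    · exact .wait p gs

lemma Wins.not_both {q : Player} (hpq : p ≠ q) {b : Bool} (hp : Wins p b G)
    (hq : Wins q (!b) G) : False := by
  induction hp with
  | termL b => cases b <;> cases hq <;> exact hpq rfl
  | termR b => cases b <;> cases hq <;> exact hpq rfl
  | move _ gs g hg _ ih =>
    cases hq with
    | wait _ _ hw => exact ih hpq (hw g hg)
  | wait _ gs _ ih =>
    cases hq with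
    | move _ _ g hg hw => exact ih g hg hpq hw

def WinEquiv (G H : Pos) : Prop := ∀ p b, Wins p b G ↔ Wins p b H

lemma winEquiv_of_forall_wins {H : Pos} (hG : ∀ b, Wins p b G) (hH : ∀ b, Wins p b H) :
    WinEquiv G H := by
  intro q b
  by_cases hq : q = p
  · subst hq
    exact iff_of_true (hG b) (hH b)
  · exact iff_of_false (fun h => h.not_both hq (hG _)) (fun h => h.not_both hq (hH _))

/-- Options of `G` without a counterpart among those of `H` do no harm when they are reversible,
i.e. when the opponent can answer them by moving back to `H`. -/
theorem winEquiv_of_moves {H : Pos} (hG : ¬IsTerminal G) (hH : ¬IsTerminal H)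
    (hHG : ∀ h ∈ moves H, ∃ g ∈ moves G, WinEquiv g h)
    (hGH : ∀ g ∈ moves G, (∃ h ∈ moves H, WinEquiv g h) ∨ ∃ K, H ∈ moves K ∧ WinEquiv g K) :
    WinEquiv G H := by
  intro p b
  cases b
  · rw [wins_false_iff hG, wins_false_iff hH]
    constructor
    · intro hwin h hh
      obtain ⟨g, hg, hgh⟩ := hHG h hh
      exact (hgh p true).1 (hwin g hg)
    · intro hwin g hg
      rcases hGH g hg with ⟨h, hh, hgh⟩ | ⟨K, hK, hgK⟩
      · exact (hgh p true).2 (hwin h hh)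
      · exact (hgK p true).2 <|
          (wins_true_iff (not_isTerminal_of_mem_moves hK)).2 ⟨H, hK, (wins_false_iff hH).2 hwin⟩
  · rw [wins_true_iff hG, wins_true_iff hH]
    constructor
    · rintro ⟨g, hg, hwin⟩
      rcases hGH g hg with ⟨h, hh, hgh⟩ | ⟨K, hK, hgK⟩
      · exact ⟨h, hh, (hgh p false).1 hwin⟩
      · have hwinK := (hgK p false).1 hwin
        exact (wins_true_iff hH).1 <|
          (wins_false_iff (not_isTerminal_of_mem_moves hK)).1 hwinK H hK
    · rintro ⟨h, hh, hwin⟩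
      obtain ⟨g, hg, hgh⟩ := hHG h hh
      exact ⟨g, hg, (hgh p false).2 hwin⟩

lemma outcome_congr {H : Pos} (h : WinEquiv G H) : outcome G = outcome H := by
  classical
  exact if_congr (h .left true) (if_congr (h .left false) rfl rfl)
    (if_congr (h .left false) rfl rfl)

lemma equiv_of_winEquiv {H : Pos} (h : ∀ X, WinEquiv (sum G X) (sum H X)) : equiv G H :=
  fun X _ => outcome_congr (h X)

mutual
def nim (t : Pos) : ℕ → Pos
  | 0 => t
  | n + 1 => opts (nimList t (n + 1))
termination_by n => 2 * n + 1
def nimList (t : Pos) : ℕ → List Pos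
  | 0 => []
  | n + 1 => nim t n :: nimList t n
termination_by n => 2 * n
end

@[simp] lemma nim_zero : nim t 0 = t := by rw [nim]

lemma nim_succ (n : ℕ) : nim t (n + 1) = opts (nimList t (n + 1)) := by rw [nim]

lemma mem_nimList {n : ℕ} {g : Pos} : g ∈ nimList t n ↔ ∃ m < n, nim t m = g := by
  induction n with
  | zero => simp [nimList]
  | succ n ih =>
    rw [nimList, List.mem_cons, ih]
    constructor
    · rintro (rfl | ⟨m, hm, rfl⟩)
      exacts [⟨n, n.lt_succ_self, rfl⟩, ⟨m, by omega, rfl⟩]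
    · rintro ⟨m, hm, rfl⟩
      rcases Nat.lt_succ_iff_lt_or_eq.1 hm with hm | rfl
      exacts [.inr ⟨m, hm, rfl⟩, .inl rfl]

lemma nimList_termL (n : ℕ) : nimList termL n = LnList n := by
  induction n with
  | zero => rw [nimList, LnList]
  | succ n ih =>
    rw [nimList, LnList, ih]
    cases n with
    | zero => rw [nim_zero, Ln]
    | succ n => rw [nim_succ, Ln, ← ih]

lemma nimList_termR (n : ℕ) : nimList termR n = RnList n := by
  induction n with
  | zero => rw [nimList, RnList]
  | succ n ih =>
    rw [nimList, RnList, ih]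
    cases n with
    | zero => rw [nim_zero, Rn]
    | succ n => rw [nim_succ, Rn, ← ih]

lemma nim_termL (n : ℕ) : nim termL n = Ln n := by
  cases n with
  | zero => rw [nim_zero, Ln]
  | succ n => rw [nim_succ, Ln, nimList_termL]

lemma nim_termR (n : ℕ) : nim termR n = Rn n := by
  cases n with
  | zero => rw [nim_zero, Rn]
  | succ n => rw [nim_succ, Rn, nimList_termR]

lemma not_isTerminal_nim {n : ℕ} (hn : 0 < n) : ¬IsTerminal (nim t n) := by
  cases n with
  | zero => omega
  | succ n => simp [nim_succ, IsTerminal]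

lemma mem_moves_nim (ht : IsTerminal t) {n : ℕ} {g : Pos} :
    g ∈ moves (nim t n) ↔ ∃ m < n, nim t m = g := by
  cases n with
  | zero => simp [ht.moves_eq_nil]
  | succ n => rw [nim_succ, moves, mem_nimList]

lemma mem_moves_sum_nim (ht : IsTerminal t) {c : ℕ} (h : 0 < c ∨ ¬IsTerminal X) {o : Pos} :
    o ∈ moves (sum (nim t c) X) ↔
      (∃ d < c, sum (nim t d) X = o) ∨ ∃ x ∈ moves X, sum (nim t c) x = o := by
  have hnt : ¬(IsTerminal (nim t c) ∧ IsTerminal X) := by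
    rintro ⟨htc, hX⟩
    rcases h with hc | hX'
    exacts [not_isTerminal_nim hc htc, hX' hX]
  simp [mem_moves_sum hnt, mem_moves_nim ht]

lemma mem_moves_sum_nim_of_lt (ht : IsTerminal t) {c d : ℕ} (h : d < c) :
    sum (nim t d) X ∈ moves (sum (nim t c) X) :=
  (mem_moves_sum_nim ht (.inl (by omega))).2 (.inl ⟨d, h, rfl⟩)

lemma wins_sum_nim_of_isTerminal (ht : IsTerminal t) (hX : IsTerminal X)
    (h : ∀ b, Wins p b (sum t X)) (n : ℕ) (b : Bool) : Wins p b (sum (nim t n) X) := by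
  induction n using Nat.strong_induction_on generalizing b with
  | _ n ih =>
  rcases Nat.eq_zero_or_pos n with rfl | hn
  · simpa using h b
  have hnt : ¬IsTerminal (sum (nim t n) X) :=
    not_isTerminal_sum fun hh => not_isTerminal_nim hn hh.1
  cases b
  · rw [wins_false_iff hnt]
    intro g hg
    rcases (mem_moves_sum_nim ht (.inl hn)).1 hg with ⟨d, hd, rfl⟩ | ⟨x, hx, -⟩
    · exact ih d hd true
    · simp [hX.moves_eq_nil] at hx
  · exact (wins_true_iff hnt).2 ⟨_, mem_moves_sum_nim_of_lt ht hn, ih 0 hn false⟩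

variable {t₁ t₂ : Pos} {a b : ℕ}

lemma not_isTerminal_sum_nim_nim (hab : 0 < a ∨ 0 < b) :
    ¬(IsTerminal (nim t₁ a) ∧ IsTerminal (nim t₂ b)) := by
  rintro ⟨ha, hb⟩
  rcases hab with hab | hab
  exacts [not_isTerminal_nim hab ha, not_isTerminal_nim hab hb]

lemma not_isTerminal_sum_sum_nim (hab : 0 < a ∨ 0 < b) :
    ¬IsTerminal (sum (sum (nim t₁ a) (nim t₂ b)) X) :=
  not_isTerminal_sum fun h => not_isTerminal_sum (not_isTerminal_sum_nim_nim hab) h.1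

lemma mem_moves_sum_sum_nim (ht₁ : IsTerminal t₁) (ht₂ : IsTerminal t₂) (hab : 0 < a ∨ 0 < b)
    {o : Pos} :
    o ∈ moves (sum (sum (nim t₁ a) (nim t₂ b)) X) ↔
      (∃ a' < a, sum (sum (nim t₁ a') (nim t₂ b)) X = o) ∨
      (∃ b' < b, sum (sum (nim t₁ a) (nim t₂ b')) X = o) ∨
      ∃ x ∈ moves X, sum (sum (nim t₁ a) (nim t₂ b)) x = o := by
  have hnt := not_isTerminal_sum_nim_nim (t₁ := t₁) (t₂ := t₂) hab
  simp [mem_moves_sum (fun h => not_isTerminal_sum hnt h.1), mem_moves_sum hnt,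
    mem_moves_nim ht₁, mem_moves_nim ht₂, or_and_right, exists_or, or_assoc]

/-- With a terminal context, the player who owns the terminal position `(t₁ + t₂) + X` wins
every position in sight, whoever moves first. -/
lemma winEquiv_sum_sum_nim_of_isTerminal (ht₁ : IsTerminal t₁) (ht₂ : IsTerminal t₂)
    (hab : 0 < a ∨ 0 < b) (hX : IsTerminal X)
    (hA : ∀ a' < a, WinEquiv (sum (sum (nim t₁ a') (nim t₂ b)) X)
      (sum (nim (sum t₁ t₂) (a' ^^^ b)) X))
    (hB : ∀ b' < b, WinEquiv (sum (sum (nim t₁ a) (nim t₂ b')) X)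
      (sum (nim (sum t₁ t₂) (a ^^^ b')) X)) :
    WinEquiv (sum (sum (nim t₁ a) (nim t₂ b)) X) (sum (nim (sum t₁ t₂) (a ^^^ b)) X) := by
  have hs := isTerminal_sum ht₁ ht₂
  obtain ⟨p, hp⟩ := (isTerminal_sum hs hX).exists_wins
  have hwin := wins_sum_nim_of_isTerminal hs hX hp
  have hG := not_isTerminal_sum_sum_nim (t₁ := t₁) (t₂ := t₂) (X := X) hab
  refine winEquiv_of_forall_wins (p := p) (fun β => ?_) (hwin _)
  cases β
  · rw [wins_false_iff hG]
    intro g hg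
    rcases (mem_moves_sum_sum_nim ht₁ ht₂ hab).1 hg with
      ⟨a', ha', rfl⟩ | ⟨b', hb', rfl⟩ | ⟨x, hx, -⟩
    · exact (hA a' ha' p true).2 (hwin _ true)
    · exact (hB b' hb' p true).2 (hwin _ true)
    · simp [hX.moves_eq_nil] at hx
  · rw [wins_true_iff hG]
    rcases hab with ha | hb
    · exact ⟨_, (mem_moves_sum_sum_nim ht₁ ht₂ (.inl ha)).2 (.inl ⟨0, ha, rfl⟩),
        (hA 0 ha p false).2 (hwin _ false)⟩
    · exact ⟨_, (mem_moves_sum_sum_nim ht₁ ht₂ (.inr hb)).2 (.inr (.inl ⟨0, hb, rfl⟩)),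
        (hB 0 hb p false).2 (hwin _ false)⟩

lemma winEquiv_sum_sum_nim_of_not_isTerminal (ht₁ : IsTerminal t₁) (ht₂ : IsTerminal t₂)
    (hab : 0 < a ∨ 0 < b) (hX : ¬IsTerminal X)
    (hA : ∀ a' < a, WinEquiv (sum (sum (nim t₁ a') (nim t₂ b)) X)
      (sum (nim (sum t₁ t₂) (a' ^^^ b)) X))
    (hB : ∀ b' < b, WinEquiv (sum (sum (nim t₁ a) (nim t₂ b')) X)
      (sum (nim (sum t₁ t₂) (a ^^^ b')) X))
    (hX' : ∀ x ∈ moves X, WinEquiv (sum (sum (nim t₁ a) (nim t₂ b)) x)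
      (sum (nim (sum t₁ t₂) (a ^^^ b)) x)) :
    WinEquiv (sum (sum (nim t₁ a) (nim t₂ b)) X) (sum (nim (sum t₁ t₂) (a ^^^ b)) X) := by
  have hs := isTerminal_sum ht₁ ht₂
  have hH : ¬IsTerminal (sum (nim (sum t₁ t₂) (a ^^^ b)) X) :=
    not_isTerminal_sum fun h => hX h.2
  have reversible : ∀ d ≠ a ^^^ b, ∀ g, WinEquiv g (sum (nim (sum t₁ t₂) d) X) →
      (∃ h ∈ moves (sum (nim (sum t₁ t₂) (a ^^^ b)) X), WinEquiv g h) ∨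
      ∃ K, sum (nim (sum t₁ t₂) (a ^^^ b)) X ∈ moves K ∧ WinEquiv g K := by
    intro d hd g hg
    rcases hd.lt_or_gt with hd | hd
    exacts [.inl ⟨_, mem_moves_sum_nim_of_lt hs hd, hg⟩,
      .inr ⟨_, mem_moves_sum_nim_of_lt hs hd, hg⟩]
  refine winEquiv_of_moves (not_isTerminal_sum_sum_nim hab) hH (fun h hh => ?_) (fun g hg => ?_)
  · rcases (mem_moves_sum_nim hs (.inr hX)).1 hh with ⟨d, hd, rfl⟩ | ⟨x, hx, rfl⟩
    · rcases Nat.exists_xor_eq_of_lt_xor hd with ⟨a', ha', rfl⟩ | ⟨b', hb', rfl⟩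
      · exact ⟨_, (mem_moves_sum_sum_nim ht₁ ht₂ hab).2 (.inl ⟨a', ha', rfl⟩), hA a' ha'⟩
      · exact ⟨_, (mem_moves_sum_sum_nim ht₁ ht₂ hab).2 (.inr (.inl ⟨b', hb', rfl⟩)),
          hB b' hb'⟩
    · exact ⟨_, (mem_moves_sum_sum_nim ht₁ ht₂ hab).2 (.inr (.inr ⟨x, hx, rfl⟩)), hX' x hx⟩
  · rcases (mem_moves_sum_sum_nim ht₁ ht₂ hab).1 hg with
      ⟨a', ha', rfl⟩ | ⟨b', hb', rfl⟩ | ⟨x, hx, rfl⟩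
    · exact reversible _ (fun h => ha'.ne (Nat.xor_left_inj.1 h)) _ (hA a' ha')
    · exact reversible _ (fun h => hb'.ne (Nat.xor_right_inj.1 h)) _ (hB b' hb')
    · exact .inl ⟨_, (mem_moves_sum_nim hs (.inr hX)).2 (.inr ⟨x, hx, rfl⟩), hX' x hx⟩

theorem winEquiv_sum_sum_nim (ht₁ : IsTerminal t₁) (ht₂ : IsTerminal t₂) (a b : ℕ) (X : Pos) :
    WinEquiv (sum (sum (nim t₁ a) (nim t₂ b)) X) (sum (nim (sum t₁ t₂) (a ^^^ b)) X) := by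
  have hA : ∀ a' < a, WinEquiv (sum (sum (nim t₁ a') (nim t₂ b)) X)
      (sum (nim (sum t₁ t₂) (a' ^^^ b)) X) :=
    fun a' _ => winEquiv_sum_sum_nim ht₁ ht₂ a' b X
  have hB : ∀ b' < b, WinEquiv (sum (sum (nim t₁ a) (nim t₂ b')) X)
      (sum (nim (sum t₁ t₂) (a ^^^ b')) X) :=
    fun b' _ => winEquiv_sum_sum_nim ht₁ ht₂ a b' X
  have hX' : ∀ x ∈ moves X, WinEquiv (sum (sum (nim t₁ a) (nim t₂ b)) x)
      (sum (nim (sum t₁ t₂) (a ^^^ b)) x) :=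
    fun x hx => winEquiv_sum_sum_nim ht₁ ht₂ a b x
  by_cases h0 : a = 0 ∧ b = 0
  · obtain ⟨rfl, rfl⟩ := h0
    simp only [nim_zero, Nat.xor_self]
    exact fun _ _ => Iff.rfl
  have hab : 0 < a ∨ 0 < b := by omega
  by_cases hX : IsTerminal X
  · exact winEquiv_sum_sum_nim_of_isTerminal ht₁ ht₂ hab hX hA hB
  · exact winEquiv_sum_sum_nim_of_not_isTerminal ht₁ ht₂ hab hX hA hB hX'
termination_by a + b + sizeOf X
decreasing_by
  all_goals first
    | omega
    | (have := sizeOf_lt_of_mem_moves hx; omega)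

theorem equiv_sum_nim_nim (ht₁ : IsTerminal t₁) (ht₂ : IsTerminal t₂) (a b : ℕ) :
    equiv (sum (nim t₁ a) (nim t₂ b)) (nim (sum t₁ t₂) (a ^^^ b)) :=
  equiv_of_winEquiv (winEquiv_sum_sum_nim ht₁ ht₂ a b)

end Pos

/-- `*L_{a} + *L_{b} ≡ *L_{a ⊕ b}`, `*L_{a} + *R_{b} ≡ *R_{a ⊕ b}`,
`*R_{a} + *R_{b} ≡ *L_{a ⊕ b}`, where `⊕` is bitwise XOR. -/
theorem Ln_Rn_sum_xor (a b : ℕ) :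
    Pos.equiv (Pos.sum (Pos.Ln a) (Pos.Ln b)) (Pos.Ln (a ^^^ b)) ∧
    Pos.equiv (Pos.sum (Pos.Ln a) (Pos.Rn b)) (Pos.Rn (a ^^^ b)) ∧
    Pos.equiv (Pos.sum (Pos.Rn a) (Pos.Rn b)) (Pos.Ln (a ^^^ b)) := by
  have hLL : Pos.sum .termL .termL = .termL := by rw [Pos.sum]
  have hLR : Pos.sum .termL .termR = .termR := by rw [Pos.sum]
  have hRR : Pos.sum .termR .termR = .termL := by rw [Pos.sum]
  refine ⟨?_, ?_, ?_⟩
  · simpa only [Pos.nim_termL, hLL] using Pos.equiv_sum_nim_nim (.inl rfl) (.inl rfl) a b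
  · simpa only [Pos.nim_termL, Pos.nim_termR, hLR] using
      Pos.equiv_sum_nim_nim (.inl rfl) (.inr rfl) a b
  · simpa only [Pos.nim_termL, Pos.nim_termR, hRR] using
      Pos.equiv_sum_nim_nim (.inr rfl) (.inr rfl) a b
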